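/- Let X be a subshift over a finite alphabet A. Then for every n ≥ 1, |Aut^{(FIP)}_{⌊(n−1)/2⌋}(X,σ)| ≤ (c_{1+c_n(X)}(X))^{2|A|(c_{n+1}(X) − c_n(X))}. -/

import Mathlib

open Filter Topology

/-- The left shift on bi-infinite sequences, as a bijection. -/
def shiftPerm (A : Type) : Equiv.Perm (ℤ → A) where
  toFun x n := x (n + 1)
  invFun x n := x (n - 1)
  left_inv x := funext fun n => by simp
  right_inv x := funext fun n => by simp

/-- A subshift: a closed, shift-invariant subset of the full shift. -/
def IsSubshift {A : Type} [TopologicalSpace A] (X : Set (ℤ → A)) : Prop :=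
  IsClosed X ∧ (shiftPerm A) '' X = X

/-- The word `w` occurs in some point of `X`. -/
def WordIn {A : Type} (X : Set (ℤ → A)) (w : List A) : Prop :=
  ∃ x ∈ X, ∃ i : ℤ, ∀ j : Fin w.length, x (i + ((j : ℕ) : ℤ)) = w.get j

/-- The language of `X`. -/
def language {A : Type} (X : Set (ℤ → A)) : Set (List A) :=
  {w | WordIn X w}

/-- The word complexity function `c_n(X)`: the number of `n`-letter words of `X`. -/
noncomputable def complexity {A : Type} (X : Set (ℤ → A)) (n : ℕ) : ℕ :=
  Nat.card {w : List A // w.length = n ∧ w ∈ language X}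

/-- The shift restricted to a subshift, as a bijection of the subshift. -/
def shiftRestrict {A : Type} [TopologicalSpace A] {X : Set (ℤ → A)} (hX : IsSubshift X) :
    Equiv.Perm ↥X where
  toFun x := ⟨shiftPerm A x, by
    have h : shiftPerm A (x : ℤ → A) ∈ (shiftPerm A) '' X := ⟨x, x.2, rfl⟩
    rwa [hX.2] at h⟩
  invFun x := ⟨(shiftPerm A).symm x, by
    have h : (x : ℤ → A) ∈ (shiftPerm A) '' X := by rw [hX.2]; exact x.2
    obtain ⟨y, hy, hyx⟩ := h
    have h2 : (shiftPerm A).symm (x : ℤ → A) = y := by rw [← hyx]; simp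
    rwa [h2]⟩
  left_inv x := Subtype.ext (by simp)
  right_inv x := Subtype.ext (by simp)

/-- The automorphism group of a subshift: shift-commuting self-homeomorphisms of `X`. -/
def Aut {A : Type} [TopologicalSpace A] {X : Set (ℤ → A)} (hX : IsSubshift X) :
    Subgroup (Equiv.Perm ↥X) where
  carrier := {φ : Equiv.Perm ↥X | Continuous ⇑φ ∧ Continuous ⇑(φ⁻¹) ∧
    ∀ x, φ (shiftRestrict hX x) = shiftRestrict hX (φ x)}
  one_mem' := ⟨continuous_id, continuous_id, fun _ => rfl⟩
  mul_mem' := by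
    rintro a b ⟨ha1, ha2, ha3⟩ ⟨hb1, hb2, hb3⟩
    refine ⟨?_, ?_, fun x => ?_⟩
    · exact ha1.comp hb1
    · exact hb2.comp ha2
    · simp only [Equiv.Perm.mul_apply, hb3, ha3]
  inv_mem' := by
    rintro a ⟨ha1, ha2, ha3⟩
    refine ⟨ha2, by simpa using ha1, fun x => ?_⟩
    apply a.injective
    rw [ha3]; simp

/-- `x` is an isolated point of `X`. -/
def IsIsolatedPoint {A : Type} [TopologicalSpace A] (X : Set (ℤ → A)) (x : ℤ → A) : Prop :=
  ∃ U : Set (ℤ → A), IsOpen U ∧ U ∩ X = {x}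

/-- `x` is an isolated periodic point of `X`. -/
def IsIsolatedPeriodicPt {A : Type} [TopologicalSpace A] (X : Set (ℤ → A)) (x : ℤ → A) : Prop :=
  x ∈ X ∧ IsIsolatedPoint X x ∧ ∃ p : ℕ, 1 ≤ p ∧ ∀ m : ℤ, x (m + (p : ℤ)) = x m

/-- `φ` is induced by the block map `Φ` with range `N`. -/
def InducedBy {A : Type} {X : Set (ℤ → A)} (φ : Equiv.Perm ↥X) (N : ℕ)
    (Φ : (Fin (2 * N + 1) → A) → A) : Prop :=
  ∀ (x : ↥X) (m : ℤ), (φ x : ℤ → A) m = Φ (fun j => (x : ℤ → A) (m - (N : ℤ) + ((j : ℕ) : ℤ)))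

/-- `φ` has range `N`: it is induced by some block map on words of length `2N+1`. -/
def HasRange {A : Type} {X : Set (ℤ → A)} (φ : Equiv.Perm ↥X) (N : ℕ) : Prop :=
  ∃ Φ : (Fin (2 * N + 1) → A) → A, InducedBy φ N Φ

/-!
Put `c = c_n(X)` and `N = ⌊(n - 1)/2⌋`, so that an automorphism `φ` of range `N` computes
`(φ x) (i + N)` from the `n`-window of `x` at `i`. If some window of `x` at or before `i` is right
special, take the last one, `w`, followed in `x` by the letter `a`. Each window strictly between `w`
and `i` determines the next one, so by pigeonhole the window at `i` already occurs among the first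
`1 + c` windows from `w` on, and these agree with the windows of any other occurrence of `wa`. Hence
`(φ x) (i + N)` is one of `1 + c` consecutive letters of `φ` at a fixed occurrence of `wa`.
Symmetrically for a left special window at or after `i`. If there is neither, the windows of `x`
from some point on repeat with a period, and the periodic point continuing them has no special
window at all; it is therefore isolated, so `φ` fixes it, and it agrees with `x` around `i`.
So `φ` is determined by at most `2|A|(c_{n+1} - c_n)` words of length `1 + c`.
-/

open Function

theorem Function.Surjective.card_add_card_nontrivial_fiber_le {α β : Type*} [Finite β]
    {f : β → α} (hf : Surjective f) :
    Nat.card α + Nat.card {a // (f ⁻¹' {a}).Nontrivial} ≤ Nat.card β := by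
  have : Finite α := Finite.of_surjective f hf
  have hsec : ∀ a : {a // (f ⁻¹' {a}).Nontrivial}, ∃ b, f b = a ∧ b ≠ surjInv hf a := by
    rintro ⟨a, b₁, hb₁, b₂, hb₂, hne⟩
    by_cases h : b₁ = surjInv hf a
    · exact ⟨b₂, hb₂, fun h' => hne (h.trans h'.symm)⟩
    · exact ⟨b₁, hb₁, h⟩
  choose g hgf hg using hsec
  rw [← Nat.card_sum]
  refine Nat.card_le_card_of_injective (Sum.elim (surjInv hf) g) ?_
  rintro (a | a) (a' | a') h <;> simp only [Sum.elim_inl, Sum.elim_inr] at h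
  · rw [injective_surjInv hf h]
  · obtain rfl : a = a' := by rw [← surjInv_eq hf a, h, hgf]
    exact absurd h.symm (hg a')
  · obtain rfl : (a : α) = a' := by rw [← surjInv_eq hf a', ← h, hgf]
    exact absurd h (hg a)
  · rw [Subtype.ext (by rw [← hgf a, ← hgf a', h] : (a : α) = a')]

theorem Nat.card_subtype_prod_le {α β : Type*} [Finite α] [Finite β] (P : α → Prop)
    (Q : α × β → Prop) :
    Nat.card {p : α × β // P p.1 ∧ Q p} ≤ Nat.card {a // P a} * Nat.card β := by
  rw [← Nat.card_prod]
  refine Nat.card_le_card_of_injective (fun p => (⟨p.1.1, p.2.1⟩, p.1.2)) fun p q h => ?_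
  simp only [Prod.mk.injEq, Subtype.mk.injEq] at h
  exact Subtype.ext (Prod.ext h.1 h.2)

section DeterministicSequence

variable {W : Type*}

def DeterministicAt (f : ℤ → W) (s : ℤ) : Prop :=
  ∀ s', f s = f s' → f (s + 1) = f (s' + 1)

variable {f : ℤ → W} {S : Set W}

theorem exists_lt_le_ncard_eq (hS : S.Finite) (hf : ∀ s, f s ∈ S) (j : ℤ) :
    ∃ t₁ t₂ : ℕ, t₁ < t₂ ∧ t₂ ≤ S.ncard ∧ f (j + t₁) = f (j + t₂) := by
  obtain ⟨t, ht, t', ht', hne, heq⟩ := Finset.exists_ne_map_eq_of_card_lt_of_maps_to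
    (s := Finset.range (S.ncard + 1)) (t := hS.toFinset) (f := fun t : ℕ => f (j + t))
    (by simp [Set.ncard_eq_toFinset_card S hS]) (fun t _ => by simpa using hf _)
  rw [Finset.mem_range] at ht ht'
  rcases hne.lt_or_gt with h | h
  · exact ⟨t, t', h, by omega, heq⟩
  · exact ⟨t', t, h, by omega, heq.symm⟩

theorem eq_add_and_exists_lt_of_deterministicAt {j : ℤ} {p : ℕ} (hp : 0 < p)
    (hper : f (j + p) = f j) (hdet : ∀ s, j ≤ s → s < j + p → DeterministicAt f s) (t : ℕ) :
    f (j + t + p) = f (j + t) ∧ ∃ r < p, f (j + t) = f (j + r) := by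
  induction t with
  | zero => exact ⟨by simpa using hper, 0, hp, rfl⟩
  | succ t ih =>
    obtain ⟨hperiod, r, hr, hfr⟩ := ih
    have hdet_r := hdet (j + r) (by omega) (by omega)
    have hnext : f (j + r + 1) = f (j + t + 1) := hdet_r _ hfr.symm
    push_cast
    rw [← add_assoc]
    refine ⟨?_, ?_⟩
    · rw [add_right_comm, ← hdet_r _ (hfr.symm.trans hperiod.symm), hnext]
    · rcases Nat.lt_or_ge (r + 1) p with hlt | hge
      · exact ⟨r + 1, hlt, by rw [← hnext, Nat.cast_succ, add_assoc]⟩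
      · obtain rfl : p = r + 1 := by omega
        refine ⟨0, hp, ?_⟩
        push_cast at hper
        rw [← hnext, add_assoc, hper, Nat.cast_zero, add_zero]

theorem exists_lt_ncard_eq_add_of_deterministicAt (hS : S.Finite) (hf : ∀ s, f s ∈ S)
    {j i : ℤ} (hji : j ≤ i) (hdet : ∀ s, j ≤ s → s < i → DeterministicAt f s) :
    ∃ d : ℕ, d < S.ncard ∧ j + d ≤ i ∧ f i = f (j + d) := by
  by_cases hnear : i - j < S.ncard
  · exact ⟨(i - j).toNat, by omega, by omega, by congr 1; omega⟩
  obtain ⟨t₁, t₂, h12, h2, heq⟩ := exists_lt_le_ncard_eq hS hf j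
  obtain ⟨-, r, hr, hfr⟩ := eq_add_and_exists_lt_of_deterministicAt (j := j + t₁) (p := t₂ - t₁)
    (by omega) (by rw [heq]; congr 1; omega) (fun s hs hs' => hdet s (by omega) (by omega))
    (i - (j + t₁)).toNat
  refine ⟨t₁ + r, by omega, by omega, ?_⟩
  convert hfr using 2 <;> push_cast <;> omega

theorem exists_lt_ncard_eq_sub_of_deterministicAt (hS : S.Finite) (hf : ∀ s, f s ∈ S)
    {i j : ℤ} (hij : i ≤ j) (hdet : ∀ s, i < s → s ≤ j → DeterministicAt (fun s => f (-s)) (-s)) :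
    ∃ d : ℕ, d < S.ncard ∧ i ≤ j - d ∧ f i = f (j - d) := by
  obtain ⟨d, hd, hjd, heq⟩ := exists_lt_ncard_eq_add_of_deterministicAt (f := fun s => f (-s))
    hS (fun s => hf _) (neg_le_neg hij)
    (fun s h₁ h₂ => by simpa using hdet (-s) (by omega) (by omega))
  refine ⟨d, hd, by omega, ?_⟩
  simpa [neg_add_eq_sub] using heq

end DeterministicSequence

section Words

variable {A : Type} {X : Set (ℤ → A)} {m n : ℕ} {x x' : ℤ → A} {i i' : ℤ}

def window (m : ℕ) (x : ℤ → A) (i : ℤ) : Fin m → A := fun t => x (i + t)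

@[simp]
theorem window_apply (m : ℕ) (x : ℤ → A) (i : ℤ) (t : Fin m) : window m x i t = x (i + t) := rfl

variable (X) in
def words (m : ℕ) : Set (Fin m → A) :=
  Set.range fun p : X × ℤ => window m p.1 p.2

theorem window_mem_words (hx : x ∈ X) (m : ℕ) (i : ℤ) : window m x i ∈ words X m :=
  ⟨(⟨x, hx⟩, i), rfl⟩

noncomputable def occurrence {w : Fin m → A} (hw : w ∈ words X m) : X × ℤ :=
  (Set.mem_range.1 hw).choose

theorem window_occurrence {w : Fin m → A} (hw : w ∈ words X m) :
    window m (occurrence hw).1 (occurrence hw).2 = w :=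
  (Set.mem_range.1 hw).choose_spec

theorem window_add_eq_of_window_eq (h : window m x i = window m x' i') {k l : ℕ}
    (hkl : k + l ≤ m) : window l x (i + k) = window l x' (i' + k) :=
  funext fun t => by simpa [add_assoc] using congrFun h ⟨k + t, by omega⟩

theorem window_succ_eq_snoc (n : ℕ) (x : ℤ → A) (i : ℤ) :
    window (n + 1) x i = Fin.snoc (window n x i) (x (i + n)) := by
  funext t
  refine Fin.lastCases ?_ (fun t => ?_) t <;> simp

theorem window_succ_eq_cons (n : ℕ) (x : ℤ → A) (i : ℤ) :
    window (n + 1) x i = Fin.cons (x i) (window n x (i + 1)) := by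
  funext t
  refine Fin.cases ?_ (fun t => ?_) t
  · simp
  · simp [add_comm (t : ℤ), add_assoc]

theorem window_sub_one_succ (n : ℕ) (x : ℤ → A) (i : ℤ) :
    window (n + 1) x (i - 1) = Fin.cons (x (i - 1)) (window n x i) := by
  rw [window_succ_eq_cons, sub_add_cancel]

theorem eq_of_forall_window_eq (hn : 0 < n) (h : ∀ s, window n x s = window n x' s) : x = x' :=
  funext fun s => by simpa using congrFun (h s) ⟨0, hn⟩

theorem words_finite [Finite A] : (words X m).Finite := Set.toFinite _

theorem mem_words_iff_ofFn_mem_language (w : Fin m → A) :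
    w ∈ words X m ↔ List.ofFn w ∈ language X := by
  constructor
  · rintro ⟨⟨x, i⟩, rfl⟩
    exact ⟨x, x.2, i, fun t => by simp⟩
  · rintro ⟨x, hx, i, h⟩
    exact ⟨(⟨x, hx⟩, i), funext fun t => by simpa using h (t.cast (by simp))⟩

theorem ncard_words : (words X m).ncard = complexity X m :=
  Nat.card_congr (((Equiv.vectorEquivFin A m).symm.subtypeEquiv fun w => by
    rw [mem_words_iff_ofFn_mem_language, ← List.Vector.toList_ofFn]; rfl).trans
    (Equiv.subtypeSubtypeEquivSubtypeInter _ _))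

theorem complexity_pos [Finite A] (hX : X.Nonempty) (m : ℕ) :
    0 < complexity X m := by
  obtain ⟨x, hx⟩ := hX
  rw [← ncard_words]
  exact (Set.ncard_pos words_finite).2 ⟨_, window_mem_words hx m 0⟩

theorem words_eq_empty : words (∅ : Set (ℤ → A)) m = ∅ := by
  simp [words]

theorem init_mem_words {v : Fin (n + 1) → A} (hv : v ∈ words X (n + 1)) :
    Fin.init v ∈ words X n := by
  obtain ⟨⟨x, i⟩, rfl⟩ := hv
  dsimp only
  rw [window_succ_eq_snoc, Fin.init_snoc]
  exact window_mem_words x.2 n i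

theorem tail_mem_words {v : Fin (n + 1) → A} (hv : v ∈ words X (n + 1)) :
    Fin.tail v ∈ words X n := by
  obtain ⟨⟨x, i⟩, rfl⟩ := hv
  dsimp only
  rw [window_succ_eq_cons, Fin.tail_cons]
  exact window_mem_words x.2 n (i + 1)

theorem exists_init_eq {w : Fin n → A} (hw : w ∈ words X n) :
    ∃ v ∈ words X (n + 1), Fin.init v = w := by
  obtain ⟨⟨x, i⟩, rfl⟩ := hw
  exact ⟨_, window_mem_words x.2 (n + 1) i, by rw [window_succ_eq_snoc, Fin.init_snoc]⟩

theorem exists_tail_eq {w : Fin n → A} (hw : w ∈ words X n) :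
    ∃ v ∈ words X (n + 1), Fin.tail v = w := by
  obtain ⟨⟨x, i⟩, rfl⟩ := hw
  exact ⟨_, window_mem_words x.2 (n + 1) (i - 1), by rw [window_sub_one_succ, Fin.tail_cons]⟩

theorem card_le_complexity_succ_sub [Finite A] {P : (Fin n → A) → Prop}
    (π : (Fin (n + 1) → A) → Fin n → A) (hπ : Set.MapsTo π (words X (n + 1)) (words X n))
    (hsurj : ∀ w ∈ words X n, ∃ v ∈ words X (n + 1), π v = w)
    (hP : ∀ w, P w → ∃ v₁ ∈ words X (n + 1), ∃ v₂ ∈ words X (n + 1),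
      v₁ ≠ v₂ ∧ π v₁ = w ∧ π v₂ = w) :
    Nat.card {w // P w} ≤ complexity X (n + 1) - complexity X n := by
  have hsurj' : Surjective hπ.restrict := fun w => by
    obtain ⟨v, hv, hvw⟩ := hsurj w w.2
    exact ⟨⟨v, hv⟩, Subtype.ext hvw⟩
  have key := hsurj'.card_add_card_nontrivial_fiber_le
  have hinj : Nat.card {w // P w} ≤ Nat.card {w // (hπ.restrict ⁻¹' {w}).Nontrivial} := by
    choose v₁ hv₁ v₂ hv₂ hne h₁ h₂ using hP
    refine Nat.card_le_card_of_injective (fun w => ⟨⟨w, h₁ w w.2 ▸ hπ (hv₁ w w.2)⟩,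
      ⟨v₁ w w.2, hv₁ w w.2⟩, Subtype.ext (h₁ w w.2), ⟨v₂ w w.2, hv₂ w w.2⟩, Subtype.ext (h₂ w w.2),
      fun h => hne w w.2 (congrArg Subtype.val h)⟩) fun w w' h => ?_
    exact Subtype.ext (congrArg (fun u => (u.1 : Fin n → A)) h)
  rw [Nat.card_coe_set_eq, Nat.card_coe_set_eq, ncard_words, ncard_words] at key
  omega

end Words

section SpecialWords

variable {A : Type} {X : Set (ℤ → A)} {n : ℕ} {x x' : ℤ → A} {i i' : ℤ}

variable (X) in
def IsRightSpecial (w : Fin n → A) : Prop :=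
  ∃ a b, a ≠ b ∧ Fin.snoc w a ∈ words X (n + 1) ∧ Fin.snoc w b ∈ words X (n + 1)

variable (X) in
def IsLeftSpecial (w : Fin n → A) : Prop :=
  ∃ a b, a ≠ b ∧ Fin.cons a w ∈ words X (n + 1) ∧ Fin.cons b w ∈ words X (n + 1)

theorem card_isRightSpecial_le [Finite A] :
    Nat.card {w : Fin n → A // IsRightSpecial X w} ≤ complexity X (n + 1) - complexity X n := by
  refine card_le_complexity_succ_sub Fin.init (fun v => init_mem_words) (fun w => exists_init_eq)
    fun w ⟨a, b, hab, ha, hb⟩ =>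
      ⟨_, ha, _, hb, fun h => hab ?_, Fin.init_snoc _ _, Fin.init_snoc _ _⟩
  simpa using congrFun h (Fin.last n)

theorem card_isLeftSpecial_le [Finite A] :
    Nat.card {w : Fin n → A // IsLeftSpecial X w} ≤ complexity X (n + 1) - complexity X n := by
  refine card_le_complexity_succ_sub Fin.tail (fun v => tail_mem_words) (fun w => exists_tail_eq)
    fun w ⟨a, b, hab, ha, hb⟩ =>
      ⟨_, ha, _, hb, fun h => hab ?_, Fin.tail_cons _ _, Fin.tail_cons _ _⟩
  simpa using congrFun h 0

theorem window_succ_eq_of_not_isRightSpecial (hx : x ∈ X) (hx' : x' ∈ X)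
    (h : window n x i = window n x' i') (hns : ¬IsRightSpecial X (window n x i)) :
    window n x (i + 1) = window n x' (i' + 1) := by
  have hnext : x (i + n) = x' (i' + n) := by
    by_contra hne
    refine hns ⟨_, _, hne, ?_, ?_⟩
    · rw [← window_succ_eq_snoc]; exact window_mem_words hx _ _
    · rw [h, ← window_succ_eq_snoc]; exact window_mem_words hx' _ _
  have hlong : window (n + 1) x i = window (n + 1) x' i' := by
    rw [window_succ_eq_snoc, window_succ_eq_snoc, h, hnext]
  simpa using window_add_eq_of_window_eq hlong (k := 1) (l := n) (by omega)

theorem window_pred_eq_of_not_isLeftSpecial (hx : x ∈ X) (hx' : x' ∈ X)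
    (h : window n x i = window n x' i') (hns : ¬IsLeftSpecial X (window n x i)) :
    window n x (i - 1) = window n x' (i' - 1) := by
  have hprev : x (i - 1) = x' (i' - 1) := by
    by_contra hne
    refine hns ⟨_, _, hne, ?_, ?_⟩
    · rw [← window_sub_one_succ]; exact window_mem_words hx _ _
    · rw [h, ← window_sub_one_succ]; exact window_mem_words hx' _ _
  have hlong : window (n + 1) x (i - 1) = window (n + 1) x' (i' - 1) := by
    rw [window_sub_one_succ, window_sub_one_succ, h, hprev]
  simpa using window_add_eq_of_window_eq hlong (k := 0) (l := n) (by omega)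

theorem deterministicAt_window (hx : x ∈ X) (hns : ¬IsRightSpecial X (window n x i)) :
    DeterministicAt (window n x) i :=
  fun _ h => window_succ_eq_of_not_isRightSpecial hx hx h hns

theorem deterministicAt_window_neg (hx : x ∈ X) (hns : ¬IsLeftSpecial X (window n x i)) :
    DeterministicAt (fun s => window n x (-s)) (-i) := fun s' h => by
  simp only [neg_neg, neg_add'] at h ⊢
  exact window_pred_eq_of_not_isLeftSpecial hx hx h hns

theorem window_add_eq_of_not_isRightSpecial (hx : x ∈ X) (hx' : x' ∈ X)
    (h : window n x i = window n x' i') (T : ℕ)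
    (hT : ∀ t < T, ¬IsRightSpecial X (window n x (i + t))) :
    window n x (i + T) = window n x' (i' + T) := by
  induction T with
  | zero => simpa using h
  | succ T ih =>
    push_cast
    rw [← add_assoc, ← add_assoc]
    exact window_succ_eq_of_not_isRightSpecial hx hx' (ih fun t ht => hT t (by omega))
      (hT T (by omega))

theorem window_sub_eq_of_not_isLeftSpecial (hx : x ∈ X) (hx' : x' ∈ X)
    (h : window n x i = window n x' i') (T : ℕ)
    (hT : ∀ t < T, ¬IsLeftSpecial X (window n x (i - t))) :
    window n x (i - T) = window n x' (i' - T) := by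
  induction T with
  | zero => simpa using h
  | succ T ih =>
    push_cast
    rw [← sub_sub, ← sub_sub]
    exact window_pred_eq_of_not_isLeftSpecial hx hx' (ih fun t ht => hT t (by omega))
      (hT T (by omega))

end SpecialWords

section Subshift

variable {A : Type} [TopologicalSpace A] {X : Set (ℤ → A)} {n : ℕ} {x y : ℤ → A}

theorem IsSubshift.shift_mem (hX : IsSubshift X) (hx : x ∈ X) (k : ℕ) :
    (fun s => x (s + k)) ∈ X := by
  induction k with
  | zero => simpa using hx
  | succ k ih =>
    rw [← hX.2]
    refine ⟨_, ih, funext fun s => ?_⟩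
    simp [shiftPerm, add_assoc, add_comm (1 : ℤ)]

theorem IsSubshift.exists_periodic_eqOn_Ici (hX : IsSubshift X) (hx : x ∈ X) {p : ℕ} (hp : 0 < p)
    {j : ℤ} (hper : ∀ s, j ≤ s → x (s + p) = x s) :
    ∃ y ∈ X, Function.Periodic y p ∧ ∀ s, j ≤ s → y s = x s := by
  have hmul : ∀ k : ℕ, ∀ s, j ≤ s → x (s + k * p) = x s := by
    intro k
    induction k with
    | zero => simp
    | succ k ih =>
      intro s hs
      rw [Nat.cast_succ, add_one_mul, ← add_assoc, hper _ (by nlinarith), ih s hs]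
  set y : ℤ → A := fun s => x (j + (s - j) % p)
  have hyper : Function.Periodic y p := fun s => by
    simp only [y, add_sub_right_comm, Int.add_emod_right]
  have hyx : ∀ s, j ≤ s → y s = x s := fun s hs => by
    have hdiv : 0 ≤ (s - j) / p := Int.ediv_nonneg (by omega) (by omega)
    have := hmul ((s - j) / p).toNat (j + (s - j) % p)
      (by have := Int.emod_nonneg (s - j) (by omega : (p : ℤ) ≠ 0); omega)
    rw [Int.toNat_of_nonneg hdiv] at this
    rw [show y s = x (j + (s - j) % p) from rfl, ← this]
    congr 1
    linarith [Int.emod_add_ediv_mul (s - j) p]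
  refine ⟨y, hX.1.mem_of_tendsto (f := fun k : ℕ => fun s => x (s + (k * p : ℕ)))
    (b := Filter.atTop) ?_
    (Filter.Eventually.of_forall fun k => hX.shift_mem hx _), hyper, hyx⟩
  refine tendsto_pi_nhds.2 fun s => tendsto_const_nhds.congr' ?_
  filter_upwards [Filter.eventually_ge_atTop (j - s).toNat] with k hk
  have : j ≤ s + (k * p : ℕ) := by push_cast; nlinarith [Int.self_le_toNat (j - s)]
  rw [← hyx _ this, Nat.cast_mul, hyper.nat_mul k s]

theorem isIsolatedPoint_of_forall_not_special [DiscreteTopology A] (hn : 0 < n) (hy : y ∈ X)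
    (hRS : ∀ s, ¬IsRightSpecial X (window n y s)) (hLS : ∀ s, ¬IsLeftSpecial X (window n y s)) :
    IsIsolatedPoint X y := by
  refine ⟨(fun z => window n z 0) ⁻¹' {window n y 0},
    (isOpen_discrete _).preimage (continuous_pi fun t => continuous_apply _), ?_⟩
  ext z
  simp only [Set.mem_inter_iff, Set.mem_preimage, Set.mem_singleton_iff]
  refine ⟨fun ⟨hz, hzX⟩ => eq_of_forall_window_eq hn fun s => ?_, by rintro rfl; exact ⟨rfl, hy⟩⟩
  obtain ⟨k, rfl | rfl⟩ := Int.eq_nat_or_neg s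
  · simpa using (window_add_eq_of_not_isRightSpecial hy hzX hz.symm k fun t _ => hRS _).symm
  · simpa using (window_sub_eq_of_not_isLeftSpecial hy hzX hz.symm k fun t _ => hLS _).symm

end Subshift

section LocalStructure

variable {A : Type} [Finite A] {X : Set (ℤ → A)} {n : ℕ} {x : ℤ → A} {i : ℤ}

theorem exists_isRightSpecial_window_eq (hx : x ∈ X)
    (h : ∃ j ≤ i, IsRightSpecial X (window n x j)) :
    ∃ (w : Fin n → A) (a : A) (hw : Fin.snoc w a ∈ words X (n + 1)), IsRightSpecial X w ∧
      ∃ e ≤ complexity X n,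
        window n x i = window n (occurrence hw).1 ((occurrence hw).2 + e) := by
  obtain ⟨j, ⟨hji, hj⟩, hmax⟩ := Int.exists_greatest_of_bdd ⟨i, fun _ h => h.1⟩ h
  have hw := window_succ_eq_snoc n x j ▸ window_mem_words hx (n + 1) j
  refine ⟨_, _, hw, hj, ?_⟩
  have h₀ : window (n + 1) x j = window (n + 1) (occurrence hw).1 (occurrence hw).2 := by
    rw [window_occurrence, window_succ_eq_snoc]
  rcases hji.eq_or_lt with rfl | hlt
  · exact ⟨0, Nat.zero_le _,
      by simpa using window_add_eq_of_window_eq h₀ (k := 0) (l := n) (by omega)⟩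
  have hnot : ∀ s, j < s → s ≤ i → ¬IsRightSpecial X (window n x s) :=
    fun s hjs hsi hs => by linarith [hmax s ⟨hsi, hs⟩]
  obtain ⟨d, hd, hdi, hid⟩ := exists_lt_ncard_eq_add_of_deterministicAt words_finite
    (window_mem_words hx n) (show j + 1 ≤ i by omega)
    fun s hs hsi => deterministicAt_window hx (hnot s (by omega) hsi.le)
  refine ⟨d + 1, by rw [← ncard_words]; omega, ?_⟩
  rw [hid]
  convert window_add_eq_of_not_isRightSpecial hx (occurrence hw).1.2
    (by simpa using window_add_eq_of_window_eq h₀ (k := 1) (l := n) (by omega)) d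
    fun t ht => hnot _ (by omega) (by omega) using 2
  push_cast
  ring

theorem exists_isLeftSpecial_window_eq (hx : x ∈ X)
    (h : ∃ j, i ≤ j ∧ IsLeftSpecial X (window n x j)) :
    ∃ (w : Fin n → A) (a : A) (hw : Fin.cons a w ∈ words X (n + 1)), IsLeftSpecial X w ∧
      ∃ e ≤ complexity X n,
        window n x i = window n (occurrence hw).1 ((occurrence hw).2 + 1 - e) := by
  obtain ⟨j, ⟨hij, hj⟩, hmin⟩ := Int.exists_least_of_bdd ⟨i, fun _ h => h.1⟩ h
  have hw := window_sub_one_succ n x j ▸ window_mem_words hx (n + 1) (j - 1)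
  refine ⟨_, _, hw, hj, ?_⟩
  have h₀ : window (n + 1) x (j - 1) =
      window (n + 1) (occurrence hw).1 (occurrence hw).2 := by
    rw [window_occurrence, window_sub_one_succ]
  rcases hij.eq_or_lt with rfl | hlt
  · exact ⟨0, Nat.zero_le _,
      by simpa using window_add_eq_of_window_eq h₀ (k := 1) (l := n) (by omega)⟩
  have hnot : ∀ s, i ≤ s → s < j → ¬IsLeftSpecial X (window n x s) :=
    fun s his hsj hs => by linarith [hmin s ⟨his, hs⟩]
  obtain ⟨d, hd, hdi, hid⟩ := exists_lt_ncard_eq_sub_of_deterministicAt words_finite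
    (window_mem_words hx n) (show i ≤ j - 1 by omega)
    fun s his hsj => deterministicAt_window_neg hx (hnot s his.le (by omega))
  refine ⟨d + 1, by rw [← ncard_words]; omega, ?_⟩
  rw [hid]
  convert window_sub_eq_of_not_isLeftSpecial hx (occurrence hw).1.2
    (by simpa using window_add_eq_of_window_eq h₀ (k := 0) (l := n) (by omega)) d
    fun t ht => hnot _ (by omega) (by omega) using 2
  push_cast
  ring

end LocalStructure

theorem exists_isIsolatedPeriodicPt_window_eq {A : Type} [Finite A] [TopologicalSpace A]
    [DiscreteTopology A] {X : Set (ℤ → A)} {n : ℕ} {x : ℤ → A} {i : ℤ} (hX : IsSubshift X)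
    (hn : 0 < n) (hx : x ∈ X) (hRS : ∀ s ≤ i, ¬IsRightSpecial X (window n x s))
    (hLS : ∀ s, i ≤ s → ¬IsLeftSpecial X (window n x s)) :
    ∃ y, IsIsolatedPeriodicPt X y ∧ window n y i = window n x i := by
  obtain ⟨t, t', htt', ht', heq⟩ :=
    exists_lt_le_ncard_eq words_finite (window_mem_words hx n) (i - (words X n).ncard)
  obtain ⟨p, hp, rfl⟩ : ∃ p, 0 < p ∧ t' = t + p := ⟨t' - t, by omega, by omega⟩
  obtain ⟨j, hj⟩ : ∃ j, j = i - (words X n).ncard + t := ⟨_, rfl⟩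
  rw [← hj] at heq
  have hperiod := eq_add_and_exists_lt_of_deterministicAt (f := window n x) (j := j) hp
    (by rw [heq]; congr 1; push_cast; omega)
    fun s _ hs => deterministicAt_window hx (hRS s (by omega))
  have hxper : ∀ s, j ≤ s → x (s + p) = x s := fun s hs => by
    have := (hperiod (s - j).toNat).1
    rw [show j + ((s - j).toNat : ℤ) = s by omega] at this
    simpa using congrFun this ⟨0, hn⟩
  obtain ⟨y, hyX, hyper, hyx⟩ := hX.exists_periodic_eqOn_Ici hx hp hxper
  have hwin : ∀ s, j ≤ s → window n y s = window n x s :=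
    fun s hs => funext fun t => hyx _ (by omega)
  have hfar : ∀ s M, ∃ s', M ≤ s' ∧ window n y s = window n x s' := fun s M => by
    set k := (max M j - s).toNat
    have hk : max M j ≤ s + (k * p : ℕ) := by
      have : (k : ℤ) ≤ (k * p : ℕ) := by exact_mod_cast Nat.le_mul_of_pos_right k hp
      omega
    refine ⟨s + (k * p : ℕ), (le_max_left M j).trans hk, ?_⟩
    rw [← hwin _ ((le_max_right M j).trans hk)]
    funext t
    simp only [window_apply, Nat.cast_mul, add_right_comm s]
    exact (hyper.nat_mul k _).symm
  refine ⟨y, ⟨hyX, isIsolatedPoint_of_forall_not_special hn hyX (fun s => ?_) (fun s => ?_),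
    p, hp, hyper⟩, hwin i (by omega)⟩
  · obtain ⟨s', hs', hw⟩ := hfar s j
    obtain ⟨-, r, hr, hxr⟩ := hperiod (s' - j).toNat
    rw [hw, show s' = j + ((s' - j).toNat : ℤ) by omega, hxr]
    exact hRS _ (by omega)
  · obtain ⟨s', hs', hw⟩ := hfar s i
    rw [hw]
    exact hLS s' hs'

theorem InducedBy.apply_add_eq_of_window_eq {A : Type} {X : Set (ℤ → A)} {φ : Equiv.Perm X}
    {N n : ℕ} {Φ : (Fin (2 * N + 1) → A) → A} (hφ : InducedBy φ N Φ) (hN : 2 * N + 1 ≤ n)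
    {x x' : X} {i i' : ℤ} (h : window n (x : ℤ → A) i = window n (x' : ℤ → A) i') :
    (φ x : ℤ → A) (i + N) = (φ x' : ℤ → A) (i' + N) := by
  rw [hφ, hφ, add_sub_cancel_right, add_sub_cancel_right]
  exact congrArg Φ (funext fun t => congrFun h ⟨t, by omega⟩)

section Records

variable {A : Type} (X : Set (ℤ → A)) (n : ℕ)

abbrev RightSpecialExtension : Type :=
  {p : (Fin n → A) × A // IsRightSpecial X p.1 ∧ Fin.snoc p.1 p.2 ∈ words X (n + 1)}

abbrev LeftSpecialExtension : Type :=
  {p : (Fin n → A) × A // IsLeftSpecial X p.1 ∧ Fin.cons p.2 p.1 ∈ words X (n + 1)}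

theorem card_rightSpecialExtension_le [Fintype A] :
    Nat.card (RightSpecialExtension X n) ≤
      (complexity X (n + 1) - complexity X n) * Fintype.card A :=
  (Nat.card_subtype_prod_le _ _).trans <| by
    rw [Nat.card_eq_fintype_card (α := A)]
    exact Nat.mul_le_mul_right _ card_isRightSpecial_le

theorem card_leftSpecialExtension_le [Fintype A] :
    Nat.card (LeftSpecialExtension X n) ≤
      (complexity X (n + 1) - complexity X n) * Fintype.card A :=
  (Nat.card_subtype_prod_le _ _).trans <| by
    rw [Nat.card_eq_fintype_card (α := A)]
    exact Nat.mul_le_mul_right _ card_isLeftSpecial_le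

variable {X n}

/-- For the chosen occurrence `(x₀, q)` of `wa`, `(φ x₀) (q + N + e)` is the block map applied to
the window of `x₀` at `q + e`; by `exists_isRightSpecial_window_eq`, the windows for `e ≤ c_n` cover
every window that follows a right special one. Symmetrically on the left. -/
noncomputable def records (N : ℕ) (φ : Equiv.Perm X) :
    (RightSpecialExtension X n → words X (1 + complexity X n)) ×
      (LeftSpecialExtension X n → words X (1 + complexity X n)) :=
  (fun p => ⟨window _ (φ (occurrence p.2.2).1) ((occurrence p.2.2).2 + N),
      window_mem_words (φ _).2 _ _⟩,
    fun p => ⟨window _ (φ (occurrence p.2.2).1) ((occurrence p.2.2).2 + 1 + N - complexity X n),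
      window_mem_words (φ _).2 _ _⟩)

theorem eq_of_records_eq [Finite A] [TopologicalSpace A] [DiscreteTopology A]
    (hX : IsSubshift X) (hn : 0 < n) {N : ℕ} (hN : 2 * N + 1 ≤ n) {φ ψ : Equiv.Perm X}
    (hφ : HasRange φ N) (hψ : HasRange ψ N)
    (hφfix : ∀ x : X, IsIsolatedPeriodicPt X x → φ x = x)
    (hψfix : ∀ x : X, IsIsolatedPeriodicPt X x → ψ x = x)
    (h : records (n := n) N φ = records N ψ) : φ = ψ := by
  obtain ⟨Φ, hΦ⟩ := hφ
  obtain ⟨Ψ, hΨ⟩ := hψ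
  refine Equiv.ext fun x => Subtype.ext (funext fun m => ?_)
  obtain ⟨i, rfl⟩ : ∃ i : ℤ, m = i + N := ⟨m - N, by ring⟩
  by_cases hA : ∃ j ≤ i, IsRightSpecial X (window n x j)
  · obtain ⟨w, a, hw, hwRS, e, he, hwin⟩ := exists_isRightSpecial_window_eq x.2 hA
    have := congrArg
      (fun r => (r.1 ⟨(w, a), hwRS, hw⟩ : Fin (1 + complexity X n) → A) ⟨e, by omega⟩) h
    rw [hΦ.apply_add_eq_of_window_eq hN hwin, hΨ.apply_add_eq_of_window_eq hN hwin]
    simpa [records, add_right_comm] using this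
  by_cases hB : ∃ j, i ≤ j ∧ IsLeftSpecial X (window n x j)
  · obtain ⟨w, a, hw, hwLS, e, he, hwin⟩ := exists_isLeftSpecial_window_eq x.2 hB
    have := congrArg
      (fun r => (r.2 ⟨(w, a), hwLS, hw⟩ : Fin (1 + complexity X n) → A)
        ⟨complexity X n - e, by omega⟩) h
    have hpos : (occurrence hw).2 + 1 + N - complexity X n + ((complexity X n - e : ℕ) : ℤ) =
        (occurrence hw).2 + 1 - e + N := by
      push_cast [he]
      ring
    rw [hΦ.apply_add_eq_of_window_eq hN hwin, hΨ.apply_add_eq_of_window_eq hN hwin]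
    simpa [records, hpos] using this
  push Not at hA hB
  obtain ⟨y, hy, hwin⟩ := exists_isIsolatedPeriodicPt_window_eq hX hn x.2 hA hB
  rw [hΦ.apply_add_eq_of_window_eq (x' := ⟨y, hy.1⟩) hN hwin.symm,
    hΨ.apply_add_eq_of_window_eq (x' := ⟨y, hy.1⟩) hN hwin.symm, hφfix ⟨y, hy.1⟩ hy,
    hψfix ⟨y, hy.1⟩ hy]

end Records

/-- For any subshift, the number of automorphisms of range
`⌊(n-1)/2⌋` fixing all isolated periodic points is at most
`c_{1+c_n(X)}(X) ^ (2|A|(c_{n+1}(X) - c_n(X)))`. -/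
theorem card_autFIP_range_le
    {A : Type} [Fintype A] [TopologicalSpace A] [DiscreteTopology A]
    (X : Set (ℤ → A)) (hX : IsSubshift X) (n : ℕ) (hn : 1 ≤ n) :
    Nat.card {φ : ↥(Aut hX) //
        (∀ x : ↥X, IsIsolatedPeriodicPt X ↑x → (φ : Equiv.Perm ↥X) x = x) ∧
        HasRange (φ : Equiv.Perm ↥X) ((n - 1) / 2)} ≤
      complexity X (1 + complexity X n) ^
        (2 * Fintype.card A * (complexity X (n + 1) - complexity X n)) := by
  rcases X.eq_empty_or_nonempty with rfl | hne
  · simp only [← ncard_words, words_eq_empty, Set.ncard_empty, Nat.sub_self, mul_zero, pow_zero]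
    exact Finite.card_le_one_iff_subsingleton.2 inferInstance
  refine le_trans (Nat.card_le_card_of_injective (fun φ => records (n := n) ((n - 1) / 2) φ.1.1)
    fun φ ψ h => Subtype.ext <| Subtype.ext <|
      eq_of_records_eq hX hn (by omega) φ.2.2 ψ.2.2 φ.2.1 ψ.2.1 h) ?_
  rw [Nat.card_prod, Nat.card_fun, Nat.card_fun, Nat.card_coe_set_eq, ncard_words, ← pow_add]
  exact Nat.pow_le_pow_right (complexity_pos hne _) (by
    linarith [card_rightSpecialExtension_le X n, card_leftSpecialExtension_le X n])
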